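/- Correctness of blind delegated measurements: Let n ≥ 1, let ρ be a 2^n × 2^n complex matrix (indexed by Fin n → Fin 2), let a, r, a', r' : Fin n → Fin 2 (viewed as bit strings), let C be a 2^n × 2^n unitary, and suppose there is c ∈ ℂ with |c| = 1 such that C · X^a Z^r = c · X^{a'} Z^{r'} · C (i.e. the Clifford C maps the encryption Pauli X^a Z^r to X^{a'} Z^{r'} up to phase). Then for every outcome string x : Fin n → Fin 2, the decoded measurement probability equals the unencrypted one: e_{x ⊕ a'}ᴴ · C · (X^a Z^r) · ρ · (X^a Z^r)ᴴ · Cᴴ · e_{x ⊕ a'} = e_xᴴ · C · ρ · Cᴴ · e_x, where e_y is the computational basis vector at y and x ⊕ a' is the bitwise XOR. -/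

import Mathlib

open Matrix Finset

/-!
Conjugating the encrypted state by `C` gives `(C P) ρ (C P)ᴴ` with `P = X^a Z^r`, and the Clifford
relation turns this into `B (C ρ Cᴴ) Bᴴ` with `B = X^{a'} Z^{r'}`, the phase `c` cancelling against
its conjugate. Conjugation by the diagonal sign matrix `Z^{r'}` leaves diagonal entries unchanged,
and conjugation by the permutation `X^{a'}` moves the diagonal entry at `x` to `x ⊕ a'`, which is
exactly the position the decoded outcome reads.
-/

/-- The `n`-qubit Pauli `X^a` for a bit string `a`: the permutation matrix sending
the basis vector `e_y` to `e_{y ⊕ a}`. -/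
noncomputable def Xstring (n : ℕ) (a : Fin n → Fin 2) :
    Matrix (Fin n → Fin 2) (Fin n → Fin 2) ℂ :=
  fun x y => if x = (fun i => y i + a i) then 1 else 0

/-- The `n`-qubit Pauli `Z^r` for a bit string `r`: the diagonal matrix with entry
`(−1)^{r·x}` at basis vector `e_x`. -/
noncomputable def Zstring (n : ℕ) (r : Fin n → Fin 2) :
    Matrix (Fin n → Fin 2) (Fin n → Fin 2) ℂ :=
  Matrix.diagonal (fun x => ∏ i, (-1 : ℂ) ^ ((r i : ℕ) * (x i : ℕ)))

lemma diagonal_mul_mul_conjTranspose_apply_self {ι R : Type*} [DecidableEq ι] [Fintype ι]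
    [CommRing R] [StarRing R] (d : ι → R) (M : Matrix ι ι R) (x : ι)
    (hd : star (d x) * d x = 1) :
    (diagonal d * M * (diagonal d)ᴴ) x x = M x x := by
  rw [diagonal_conjTranspose, mul_diagonal, diagonal_mul, Pi.star_apply,
    mul_comm (d x), mul_assoc, mul_comm (d x), hd, mul_one]

lemma smul_mul_mul_conjTranspose_smul {ι 𝕜 : Type*} [Fintype ι] [RCLike 𝕜] {c : 𝕜}
    (hc : ‖c‖ = 1) (A ρ : Matrix ι ι 𝕜) : (c • A) * ρ * (c • A)ᴴ = A * ρ * Aᴴ := by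
  have hcc : c * star c = 1 := by
    rw [mul_comm, RCLike.star_def, RCLike.conj_mul, hc]
    norm_num
  rw [conjTranspose_smul, smul_mul, smul_mul, Matrix.mul_smul, smul_smul, hcc, one_smul]

section

variable {n : ℕ}

lemma bits_add_add_self (x a : Fin n → Fin 2) : x + a + a = x :=
  funext fun i => by
    have key : ∀ y b : Fin 2, y + b + b = y := by decide
    exact key (x i) (a i)

lemma Xstring_apply (a u v : Fin n → Fin 2) : Xstring n a u v = if v = u + a then 1 else 0 := by
  refine if_congr ⟨fun h => ?_, fun h => ?_⟩ rfl rfl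
  · rw [show u = v + a from h, bits_add_add_self]
  · exact (bits_add_add_self u a).symm.trans (congrArg (· + a) h.symm)

lemma Xstring_mul_apply (a : Fin n → Fin 2) (N : Matrix (Fin n → Fin 2) (Fin n → Fin 2) ℂ)
    (u v : Fin n → Fin 2) : (Xstring n a * N) u v = N (u + a) v := by
  simp only [mul_apply, Xstring_apply, ite_mul, one_mul, zero_mul, sum_ite_eq', mem_univ, if_true]

lemma mul_conjTranspose_Xstring_apply (a : Fin n → Fin 2)
    (N : Matrix (Fin n → Fin 2) (Fin n → Fin 2) ℂ) (u v : Fin n → Fin 2) :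
    (N * (Xstring n a)ᴴ) u v = N u (v + a) := by
  simp only [mul_apply, conjTranspose_apply, Xstring_apply, apply_ite star, star_one, star_zero,
    mul_ite, mul_one, mul_zero, sum_ite_eq', mem_univ, if_true]

lemma star_mul_self_Zstring_diag (r x : Fin n → Fin 2) :
    star (∏ i, (-1 : ℂ) ^ ((r i : ℕ) * (x i : ℕ))) * ∏ i, (-1 : ℂ) ^ ((r i : ℕ) * (x i : ℕ))
      = 1 := by
  rw [star_prod, ← prod_mul_distrib]
  refine prod_eq_one fun i _ => ?_
  rw [star_pow, star_neg, star_one, ← mul_pow, neg_one_mul, neg_neg, one_pow]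

lemma pauli_mul_mul_conjTranspose_apply_add (a r : Fin n → Fin 2)
    (M : Matrix (Fin n → Fin 2) (Fin n → Fin 2) ℂ) (x : Fin n → Fin 2) :
    (Xstring n a * Zstring n r * M * (Xstring n a * Zstring n r)ᴴ) (x + a) (x + a) = M x x := by
  rw [conjTranspose_mul, ← mul_assoc, mul_assoc (Xstring n a), mul_assoc (Xstring n a),
    mul_conjTranspose_Xstring_apply, Xstring_mul_apply, bits_add_add_self]
  exact diagonal_mul_mul_conjTranspose_apply_self _ M x (star_mul_self_Zstring_diag r x)

end

theorem blind_measurements_correct (n : ℕ)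
    (ρ C : Matrix (Fin n → Fin 2) (Fin n → Fin 2) ℂ)
    (a r a' r' : Fin n → Fin 2) (c : ℂ) (hc : ‖c‖ = 1)
    (hcomm : C * (Xstring n a * Zstring n r)
        = c • ((Xstring n a' * Zstring n r') * C)) :
    ∀ x : Fin n → Fin 2,
      (C * (Xstring n a * Zstring n r) * ρ * (Xstring n a * Zstring n r)ᴴ * Cᴴ)
          (fun i => x i + a' i) (fun i => x i + a' i)
        = (C * ρ * Cᴴ) x x := by
  intro x
  set B := Xstring n a' * Zstring n r'
  have hconj : C * (Xstring n a * Zstring n r) * ρ * (Xstring n a * Zstring n r)ᴴ * Cᴴ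
      = B * (C * ρ * Cᴴ) * Bᴴ :=
    calc _ = (C * (Xstring n a * Zstring n r)) * ρ * (C * (Xstring n a * Zstring n r))ᴴ := by
            simp only [conjTranspose_mul, mul_assoc]
      _ = (B * C) * ρ * (B * C)ᴴ := by rw [hcomm, smul_mul_mul_conjTranspose_smul hc]
      _ = B * (C * ρ * Cᴴ) * Bᴴ := by simp only [conjTranspose_mul, mul_assoc]
  rw [hconj]
  exact pauli_mul_mul_conjTranspose_apply_add a' r' (C * ρ * Cᴴ) x
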